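/- Let R_j : ℝ³ → ℝ (j ∈ ℤ) satisfy the parabolic monotonicity conditions ∂₁R_j > 0 and ∂₃R_j > 0. If two sequences (x_j) and (x′_j) both satisfy R_j(x_{j−1}, x_j, x_{j+1}) = 0 for all j, and x_j = x′_j at some index j while x_{j−1} ≤ x′_{j−1} and x_{j+1} ≤ x′_{j+1} with at least one of these inequalities strict, then a contradiction follows; consequently any coincidence x_j = x′_j of two distinct solutions is a transverse crossing: (x_{j−1} − x′_{j−1})(x_{j+1} − x′_{j+1}) < 0. -/

import Mathlib

/-!
At a coincidence `x j = x' j`, monotonicity of `R j` in its outer arguments turns a one-sided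
ordering of the neighbours with one strict inequality into `0 = R j (x ⋯) < R j (x' ⋯) = 0`.
When both neighbours coincide as well, injectivity in the outer arguments lets the recurrence
be solved forwards and backwards, so two solutions agreeing at two consecutive indices agree
everywhere.
-/

variable {α β : Type*}

def IsRecurrenceSolution (R : ℤ → α → α → α → β) [Zero β] (x : ℤ → α) : Prop :=
  ∀ j, R j (x (j - 1)) (x j) (x (j + 1)) = 0

namespace IsRecurrenceSolution

variable {R : ℤ → α → α → α → β} [Zero β] {x x' : ℤ → α}

theorem eq_succ_of_eq (hR3 : ∀ j a b, Function.Injective fun c => R j a b c)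
    (hx : IsRecurrenceSolution R x) (hx' : IsRecurrenceSolution R x') {k : ℤ}
    (hpred : x (k - 1) = x' (k - 1)) (hk : x k = x' k) : x (k + 1) = x' (k + 1) := by
  have h := hx k
  rw [hpred, hk, ← hx' k] at h
  exact hR3 k _ _ h

theorem eq_pred_of_eq (hR1 : ∀ j b c, Function.Injective fun a => R j a b c)
    (hx : IsRecurrenceSolution R x) (hx' : IsRecurrenceSolution R x') {k : ℤ}
    (hk : x k = x' k) (hsucc : x (k + 1) = x' (k + 1)) : x (k - 1) = x' (k - 1) := by
  have h := hx k
  rw [hk, hsucc, ← hx' k] at h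
  exact hR1 k _ _ h

theorem eq_of_eq_of_eq_succ (hR1 : ∀ j b c, Function.Injective fun a => R j a b c)
    (hR3 : ∀ j a b, Function.Injective fun c => R j a b c)
    (hx : IsRecurrenceSolution R x) (hx' : IsRecurrenceSolution R x') {j : ℤ}
    (hj : x j = x' j) (hsucc : x (j + 1) = x' (j + 1)) : x = x' := by
  suffices h : ∀ k, x k = x' k ∧ x (k + 1) = x' (k + 1) from funext fun k => (h k).1
  intro k
  refine Int.inductionOn' k j ⟨hj, hsucc⟩ (fun k _ ih => ?_) (fun k _ ih => ?_)
  · refine ⟨ih.2, eq_succ_of_eq hR3 hx hx' ?_ ih.2⟩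
    simpa only [add_sub_cancel_right] using ih.1
  · refine ⟨eq_pred_of_eq hR1 hx hx' ih.1 ih.2, ?_⟩
    simpa only [sub_add_cancel] using ih.1

theorem not_tangent [PartialOrder α] [Preorder β] (hR1 : ∀ j b c, StrictMono fun a => R j a b c)
    (hR3 : ∀ j a b, StrictMono fun c => R j a b c)
    (hx : IsRecurrenceSolution R x) (hx' : IsRecurrenceSolution R x') {j : ℤ}
    (hj : x j = x' j) (hpred : x (j - 1) ≤ x' (j - 1)) (hsucc : x (j + 1) ≤ x' (j + 1))
    (hstrict : x (j - 1) < x' (j - 1) ∨ x (j + 1) < x' (j + 1)) : False := by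
  have hlt : R j (x (j - 1)) (x j) (x (j + 1)) < R j (x' (j - 1)) (x' j) (x' (j + 1)) := by
    rw [← hj]
    rcases hstrict with hpred_lt | hsucc_lt
    · exact ((hR3 j _ _).monotone hsucc).trans_lt (hR1 j _ _ hpred_lt)
    · exact (hR3 j _ _ hsucc_lt).trans_le ((hR1 j _ _).monotone hpred)
  rw [hx j, hx' j] at hlt
  exact lt_irrefl 0 hlt

theorem mul_sub_neg_of_ne [Ring α] [LinearOrder α] [IsStrictOrderedRing α] [Preorder β]
    (hR1 : ∀ j b c, StrictMono fun a => R j a b c) (hR3 : ∀ j a b, StrictMono fun c => R j a b c)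
    (hx : IsRecurrenceSolution R x) (hx' : IsRecurrenceSolution R x') (hne : x ≠ x') {j : ℤ}
    (hj : x j = x' j) : (x (j - 1) - x' (j - 1)) * (x (j + 1) - x' (j + 1)) < 0 := by
  rcases lt_trichotomy (x (j - 1)) (x' (j - 1)) with hlt | heq | hgt
  · have hsucc : x' (j + 1) < x (j + 1) :=
      lt_of_not_ge fun hle => not_tangent hR1 hR3 hx hx' hj hlt.le hle (Or.inl hlt)
    exact mul_neg_of_neg_of_pos (sub_neg.mpr hlt) (sub_pos.mpr hsucc)
  · refine absurd (eq_of_eq_of_eq_succ (fun j b c => (hR1 j b c).injective)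
      (fun j a b => (hR3 j a b).injective) hx hx' heq ?_) hne
    rwa [sub_add_cancel]
  · have hsucc : x (j + 1) < x' (j + 1) :=
      lt_of_not_ge fun hle => not_tangent hR1 hR3 hx' hx hj.symm hgt.le hle (Or.inl hgt)
    exact mul_neg_of_pos_of_neg (sub_pos.mpr hgt) (sub_neg.mpr hsucc)

end IsRecurrenceSolution

/-- No-tangency lemma for parabolic recurrence relations: if `R_j` is strictly
increasing in its first and third arguments and `x, x′` are solutions of
`R_j(x_{j−1}, x_j, x_{j+1}) = 0`, then a coincidence `x_j = x′_j` with
`x_{j−1} ≤ x′_{j−1}`, `x_{j+1} ≤ x′_{j+1}` and one inequality strict is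
impossible; consequently every coincidence of two distinct solutions is a
transverse crossing. -/
theorem parabolic_no_tangency
    (R : ℤ → ℝ → ℝ → ℝ → ℝ)
    (hR1 : ∀ j b c, StrictMono fun a => R j a b c)
    (hR3 : ∀ j a b, StrictMono fun c => R j a b c)
    (x x' : ℤ → ℝ)
    (hx : ∀ j, R j (x (j - 1)) (x j) (x (j + 1)) = 0)
    (hx' : ∀ j, R j (x' (j - 1)) (x' j) (x' (j + 1)) = 0) :
    (∀ j, x j = x' j → x (j - 1) ≤ x' (j - 1) → x (j + 1) ≤ x' (j + 1) →
      (x (j - 1) < x' (j - 1) ∨ x (j + 1) < x' (j + 1)) → False) ∧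
    (x ≠ x' → ∀ j, x j = x' j →
      (x (j - 1) - x' (j - 1)) * (x (j + 1) - x' (j + 1)) < 0) :=
  ⟨fun _ hj => IsRecurrenceSolution.not_tangent hR1 hR3 hx hx' hj,
    fun hne _ hj => IsRecurrenceSolution.mul_sub_neg_of_ne hR1 hR3 hx hx' hne hj⟩
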